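/- Let n ≥ 1 and define u : ℝⁿ → ℝ by u(x) = exp(x₁), and let X be the constant vector field e₁ (the first standard basis vector). Then u is positive, nonconstant, and satisfies Δu - X·∇u = 0 on ℝⁿ, while the symmetric part of the Jacobian of X vanishes (so Ric_X = 0 ≥ 0). -/

import Mathlib

/-- The `i`-th partial derivative of `f : ℝⁿ → ℝ` at `x`. -/
noncomputable def partialDeriv {n : ℕ} (f : (Fin n → ℝ) → ℝ) (i : Fin n)
    (x : Fin n → ℝ) : ℝ :=
  fderiv ℝ f x (Pi.single i 1)

section PartialDeriv

variable {n : ℕ}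

lemma HasFDerivAt.partialDeriv_eq {f : (Fin n → ℝ) → ℝ} {f' : (Fin n → ℝ) →L[ℝ] ℝ}
    {x : Fin n → ℝ} (hf : HasFDerivAt f f' x) (i : Fin n) :
    partialDeriv f i x = f' (Pi.single i 1) := by
  rw [partialDeriv, hf.fderiv]

lemma partialDeriv_const (c : ℝ) (i : Fin n) (x : Fin n → ℝ) :
    partialDeriv (fun _ => c) i x = 0 := by
  simp [partialDeriv]

lemma partialDeriv_exp_coord (k i : Fin n) :
    partialDeriv (fun y => Real.exp (y k)) i =
      fun y => if i = k then Real.exp (y k) else 0 := by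
  funext y
  have hexp : HasFDerivAt (fun y : Fin n → ℝ => Real.exp (y k))
      (Real.exp (y k) • (ContinuousLinearMap.proj k : (Fin n → ℝ) →L[ℝ] ℝ)) y :=
    (Real.hasDerivAt_exp (y k)).comp_hasFDerivAt (f := ContinuousLinearMap.proj k) y
      (ContinuousLinearMap.proj k : (Fin n → ℝ) →L[ℝ] ℝ).hasFDerivAt
  rw [hexp.partialDeriv_eq]
  by_cases h : i = k
  · subst h; simp
  · simp [h, Ne.symm h]

lemma sum_partialDeriv_partialDeriv_exp_coord (k : Fin n) (x : Fin n → ℝ) :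
    ∑ i, partialDeriv (fun y => partialDeriv (fun z => Real.exp (z k)) i y) i x
      = Real.exp (x k) := by
  rw [Finset.sum_eq_single k]
  · simp [partialDeriv_exp_coord]
  · intro i _ hik
    simp [partialDeriv_exp_coord, hik, partialDeriv_const]
  · simp

lemma sum_single_mul_partialDeriv_exp_coord (k : Fin n) (x : Fin n → ℝ) :
    ∑ j, (Pi.single k 1 : Fin n → ℝ) j * partialDeriv (fun y => Real.exp (y k)) j x
      = Real.exp (x k) := by
  simp [partialDeriv_exp_coord]

end PartialDeriv

theorem exponential_counterexample (n : ℕ) (hn : 1 ≤ n)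
    (u : (Fin n → ℝ) → ℝ) (hu : ∀ x, u x = Real.exp (x ⟨0, hn⟩))
    (X : (Fin n → ℝ) → (Fin n → ℝ)) (hX : ∀ x, X x = Pi.single ⟨0, hn⟩ 1) :
    (∀ x, 0 < u x) ∧
    (∃ x y, u x ≠ u y) ∧
    (∀ x, (∑ i, partialDeriv (fun y => partialDeriv u i y) i x)
        - (∑ j, X x j * partialDeriv u j x) = 0) ∧
    (∀ x, ∀ i j : Fin n,
      partialDeriv (fun y => X y j) i x + partialDeriv (fun y => X y i) j x = 0) := by
  obtain rfl : u = fun y => Real.exp (y ⟨0, hn⟩) := funext hu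
  obtain rfl : X = fun _ => Pi.single ⟨0, hn⟩ 1 := funext hX
  refine ⟨fun x => Real.exp_pos _, ?_, fun x => ?_, fun x i j => ?_⟩
  · refine ⟨0, Pi.single ⟨0, hn⟩ 1, ?_⟩
    simpa using (Real.one_lt_exp_iff.2 one_pos).ne
  · rw [sum_partialDeriv_partialDeriv_exp_coord, sum_single_mul_partialDeriv_exp_coord, sub_self]
  · simp only [partialDeriv_const, add_zero]
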